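/- Fix ρ > r_e > 0, inclination φ ∈ (0,π), and distance d with ρ − r_e ≤ d ≤ √(ρ² − r_e²). Set c = (ρ² + r_e² − d²)/(2ρ r_e) and assume c < sin φ. Then the set of orbital angles ω ∈ [0,2π) for which √(ρ² − 2ρ r_e sin ω sin φ + r_e²) ≤ d is an arc whose total angular length is 2·arcsin(√(1 − c²/sin²φ)), so the corresponding arc of the circle of radius ρ has length 2ρ·arcsin(√(1 − (ρ²+r_e²−d²)²/(2ρ r_e sin φ)²)). -/

import Mathlib

open Real MeasureTheory
open scoped ENNReal

/-! The satellite is within distance `d` of `u` exactly when `sin ω ≥ a := c / sin φ`, and for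
`0 ≤ a ≤ 1` the angles in `[0, 2π)` with `sin ω ≥ a` form the arc `[arcsin a, π - arcsin a]`,
centred at `π/2`, of length `π - 2 arcsin a = 2 arccos a = 2 arcsin √(1 - a²)`. -/

lemma sqrt_sub_two_mul_add_le_iff {ρ r d s t : ℝ} (hd : 0 ≤ d) (ht : 0 < 2 * ρ * r * t) :
    √(ρ ^ 2 - 2 * ρ * r * s * t + r ^ 2) ≤ d ↔ (ρ ^ 2 + r ^ 2 - d ^ 2) / (2 * ρ * r) / t ≤ s := by
  rw [sqrt_le_iff, div_div, div_le_iff₀ ht]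
  constructor
  · rintro ⟨-, h⟩
    linarith
  · intro h
    exact ⟨hd, by linarith⟩

lemma setOf_le_sin_inter_Ico_eq_Icc {a : ℝ} (ha₀ : 0 ≤ a) (ha₁ : a ≤ 1) :
    {ω ∈ Set.Ico (0 : ℝ) (2 * π) | a ≤ sin ω} = Set.Icc (arcsin a) (π - arcsin a) := by
  have ha : a ∈ Set.Icc (-1 : ℝ) 1 := ⟨by linarith, ha₁⟩
  have harcsin₀ : 0 ≤ arcsin a := arcsin_nonneg.2 ha₀
  have harcsin₁ : arcsin a ≤ π / 2 := arcsin_le_pi_div_two a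
  ext ω
  simp only [Set.mem_ofPred_eq, Set.mem_Ico, Set.mem_Icc]
  rcases le_or_gt ω (π / 2) with hω | hω
  · have key := arcsin_le_iff_le_sin ha (y := ω)
    constructor
    · rintro ⟨⟨hω₀, -⟩, hs⟩
      exact ⟨(key ⟨by linarith [pi_pos], hω⟩).2 hs, by linarith⟩
    · rintro ⟨hω₀, -⟩
      exact ⟨⟨by linarith, by linarith [pi_pos]⟩, (key ⟨by linarith [pi_pos], hω⟩).1 hω₀⟩
  rcases le_or_gt ω π with hωπ | hωπ
  · have key := arcsin_le_iff_le_sin ha (y := π - ω)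
    rw [sin_pi_sub] at key
    constructor
    · rintro ⟨-, hs⟩
      exact ⟨by linarith, by linarith [(key ⟨by linarith, by linarith⟩).2 hs]⟩
    · rintro ⟨-, hω₁⟩
      exact ⟨⟨by linarith, by linarith [pi_pos]⟩, (key ⟨by linarith, by linarith⟩).1 (by linarith)⟩
  · refine iff_of_false (fun ⟨⟨_, hω₂⟩, hs⟩ => ?_) (fun ⟨_, hω₁⟩ => by linarith)
    have hsin : sin ω < 0 := by
      rw [← sin_sub_two_pi]
      exact sin_neg_of_neg_of_neg_pi_lt (by linarith) (by linarith)
    linarith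

lemma volume_setOf_le_sin_inter_Ico {a : ℝ} (ha₀ : 0 ≤ a) (ha₁ : a ≤ 1) :
    volume {ω ∈ Set.Ico (0 : ℝ) (2 * π) | a ≤ sin ω} = ENNReal.ofReal (2 * arccos a) := by
  rw [setOf_le_sin_inter_Ico_eq_Icc ha₀ ha₁, Real.volume_Icc, arccos_eq_pi_div_two_sub_arcsin]
  ring_nf

/-- For `ρ > r_e > 0`, `φ ∈ (0,π)`, `ρ − r_e ≤ d ≤ √(ρ²−r_e²)` and
`c = (ρ²+r_e²−d²)/(2ρ r_e) < sin φ`, the set of orbital angles `ω ∈ [0,2π)` at which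
the satellite is within distance `d` of `u = (0,0,r_e)` has Lebesgue measure
`2 arcsin √(1 − c²/sin²φ)`; hence the arc of the orbit of radius `ρ` inside the
spherical cap `C(ρ,d)` has length
`2 ρ arcsin √(1 − ((ρ²+r_e²−d²)/(2ρ r_e sin φ))²)`. -/
theorem arc_length_in_cap (ρ r_e d φ : ℝ) (hre : 0 < r_e) (hρ : r_e < ρ)
    (hφ : φ ∈ Set.Ioo (0 : ℝ) Real.pi)
    (hd₁ : ρ - r_e ≤ d) (hd₂ : d ≤ Real.sqrt (ρ ^ 2 - r_e ^ 2))
    (hc : (ρ ^ 2 + r_e ^ 2 - d ^ 2) / (2 * ρ * r_e) < Real.sin φ) :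
    volume {ω ∈ Set.Ico (0 : ℝ) (2 * Real.pi) |
        Real.sqrt (ρ ^ 2 - 2 * ρ * r_e * Real.sin ω * Real.sin φ + r_e ^ 2) ≤ d}
      = ENNReal.ofReal (2 * Real.arcsin (Real.sqrt
          (1 - ((ρ ^ 2 + r_e ^ 2 - d ^ 2) / (2 * ρ * r_e)) ^ 2 / Real.sin φ ^ 2)))
    ∧ ρ * (2 * Real.arcsin (Real.sqrt
          (1 - ((ρ ^ 2 + r_e ^ 2 - d ^ 2) / (2 * ρ * r_e)) ^ 2 / Real.sin φ ^ 2)))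
      = 2 * ρ * Real.arcsin (Real.sqrt
          (1 - ((ρ ^ 2 + r_e ^ 2 - d ^ 2) / (2 * ρ * r_e * Real.sin φ)) ^ 2)) := by
  have hsinφ : 0 < sin φ := sin_pos_of_pos_of_lt_pi hφ.1 hφ.2
  have hρ₀ : 0 < ρ := hre.trans hρ
  have hd₀ : 0 ≤ d := by linarith
  have hd_sq : d ^ 2 ≤ ρ ^ 2 - r_e ^ 2 := by
    calc d ^ 2 ≤ √(ρ ^ 2 - r_e ^ 2) ^ 2 := pow_le_pow_left₀ hd₀ hd₂ 2
      _ = ρ ^ 2 - r_e ^ 2 := sq_sqrt (by nlinarith)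
  set a := (ρ ^ 2 + r_e ^ 2 - d ^ 2) / (2 * ρ * r_e) / sin φ with ha
  have ha₀ : 0 ≤ a := by
    have : 0 ≤ ρ ^ 2 + r_e ^ 2 - d ^ 2 := by nlinarith
    positivity
  have ha₁ : a ≤ 1 := (div_le_one hsinφ).2 hc.le
  have hdist : ∀ ω, √(ρ ^ 2 - 2 * ρ * r_e * sin ω * sin φ + r_e ^ 2) ≤ d ↔ a ≤ sin ω :=
    fun ω => sqrt_sub_two_mul_add_le_iff hd₀ (by positivity)
  refine ⟨?_, by rw [← div_pow, div_div]; ring⟩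
  simp only [hdist, ← div_pow, ← ha]
  rw [volume_setOf_le_sin_inter_Ico ha₀ ha₁, arccos_eq_arcsin ha₀]
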